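/- arXiv:2206.11009 — 5 statements merged into one kernel-verified Lean document; each statement's English description precedes it below -/
import Mathlib

section
/- Let M be an m×n real matrix with nonnegative entries and let PG be its primary bipartite graph. If every cycle of length at least 8 in PG has a chord, then the matrix M Mᵀ has a chordal sparsity pattern. -/
/-!
Let `c₀ c₁ ⋯ c_{k-1}` be a chordless cycle of length `k ≥ 4` in the sparsity graph of `M Mᵀ`.
By nonnegativity, two rows are adjacent iff they share a column in which both are nonzero, so
consecutive rows `cₜ, cₜ₊₁` share some column `jₜ`, and rows sharing a column are consecutive on
the cycle. Three rows sharing a column would therefore span a triangle of cycle edges, which is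
impossible for `k ≥ 4`. Hence the `jₜ` are distinct and `c₀ j₀ c₁ j₁ ⋯ c_{k-1} j_{k-1}` is a
cycle of length `2k ≥ 8` in the primary graph. A chord of it joins some `cₛ` to some `jₜ`
with `s ∉ {t, t+1}`, making `cₛ, cₜ, cₜ₊₁` three rows sharing the column `jₜ`.
-/

open Matrix

/-- A cycle `w` (a closed walk) in a simple graph `G` has a chord if there is an edge of `G`
joining two vertices of the cycle that is not one of the edges of the cycle (equivalently, for a
cycle, the two vertices are not consecutive on the cycle). -/
def SimpleGraph.Walk.HasChord {V : Type*} {G : SimpleGraph V} {v : V} (w : G.Walk v v) : Prop :=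
  ∃ x y : V, x ∈ w.support ∧ y ∈ w.support ∧ G.Adj x y ∧ s(x, y) ∉ w.edges

/-- A simple graph is chordal if every cycle of length at least 4 has a chord. -/
def SimpleGraph.IsChordalGraph {V : Type*} (G : SimpleGraph V) : Prop :=
  ∀ ⦃v : V⦄ (w : G.Walk v v), w.IsCycle → 4 ≤ w.length → w.HasChord

/-- The primary bipartite graph of an `m × n` matrix `M`: vertices `Fin m ⊕ Fin n`, with an edge
between left vertex `i` and right vertex `j` iff `M i j ≠ 0`, and no edges within a part. -/
def primaryGraph {m n : ℕ} (M : Matrix (Fin m) (Fin n) ℝ) : SimpleGraph (Fin m ⊕ Fin n) :=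
  SimpleGraph.fromRel (fun a b => ∃ i j, a = Sum.inl i ∧ b = Sum.inr j ∧ M i j ≠ 0)

/-- The sparsity-pattern graph of a square matrix `B`: distinct `i`, `i'` are adjacent
whenever `B i i' ≠ 0`. -/
def sparsityGraph {k : ℕ} (B : Matrix (Fin k) (Fin k) ℝ) : SimpleGraph (Fin k) :=
  SimpleGraph.fromRel (fun i i' => B i i' ≠ 0)

namespace SimpleGraph.Walk

variable {V : Type*} {G : SimpleGraph V} {u : V} {p : G.Walk u u}

lemma IsCycle.length_eq_three_of_mem_edges_snd_penultimate (hp : p.IsCycle)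
    (h : s(p.snd, p.penultimate) ∈ p.edges) : p.length = 3 := by
  have h3 := hp.three_le_length
  obtain ⟨i, hi, he⟩ := p.mk_mem_edges_iff_exists.mp h
  rcases Sym2.eq_iff.mp he with ⟨h1, h2⟩ | ⟨h1, h2⟩
  · have hi1 : i = 1 := hp.getVert_injOn' (by simp; omega) (by simp; omega) h1
    subst hi1
    have := hp.getVert_injOn (by simp; omega) (by simp; omega) h2
    omega
  · have hi0 : i + 1 = 1 := hp.getVert_injOn (by simp; omega) (by simp; omega) h2
    rw [show i = 0 by omega] at h1
    have := hp.getVert_injOn' (by simp) (by simp) h1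
    omega

lemma IsCycle.length_eq_three_of_triangle {a b c : V} (hp : p.IsCycle)
    (hab : s(a, b) ∈ p.edges) (hac : s(a, c) ∈ p.edges) (hbc : s(b, c) ∈ p.edges)
    (hne : b ≠ c) : p.length = 3 := by
  classical
  have ha : a ∈ p.support := p.fst_mem_support_of_mem_edges hab
  set q := p.rotate a ha
  have hq : q.IsCycle := hp.rotate ha
  have hmem : ∀ {e}, e ∈ q.edges ↔ e ∈ p.edges := (p.rotate_edges a ha).mem_iff
  have hnbr : ∀ {x}, s(a, x) ∈ p.edges → x = q.snd ∨ x = q.penultimate := by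
    intro x hx
    have : x ∈ q.toSubgraph.neighborSet a := adj_toSubgraph_iff_mem_edges.mpr (hmem.mpr hx)
    simpa [hq.neighborSet_toSubgraph_endpoint] using this
  rw [← p.length_rotate a ha]
  refine hq.length_eq_three_of_mem_edges_snd_penultimate (hmem.mpr ?_)
  rcases hnbr hab with rfl | rfl <;> rcases hnbr hac with rfl | rfl
  · exact absurd rfl hne
  · exact hbc
  · rwa [Sym2.eq_swap]
  · exact absurd rfl hne

end SimpleGraph.Walk

section Projection

open SimpleGraph

variable {α β : Type*}

def bipartiteRelGraph (r : α → β → Prop) : SimpleGraph (α ⊕ β) :=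
  fromRel fun a b => ∃ i j, a = Sum.inl i ∧ b = Sum.inr j ∧ r i j

def projectionGraph (r : α → β → Prop) : SimpleGraph α :=
  fromRel fun i i' => ∃ j, r i j ∧ r i' j

variable {r : α → β → Prop}

@[simp] lemma bipartiteRelGraph_adj_inl_inr {i : α} {j : β} :
    (bipartiteRelGraph r).Adj (.inl i) (.inr j) ↔ r i j := by
  simp [bipartiteRelGraph]

@[simp] lemma bipartiteRelGraph_adj_inr_inl {i : α} {j : β} :
    (bipartiteRelGraph r).Adj (.inr j) (.inl i) ↔ r i j := by
  simp [bipartiteRelGraph]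

@[simp] lemma bipartiteRelGraph_not_adj_inl_inl {i i' : α} :
    ¬ (bipartiteRelGraph r).Adj (.inl i) (.inl i') := by
  simp [bipartiteRelGraph]

@[simp] lemma bipartiteRelGraph_not_adj_inr_inr {j j' : β} :
    ¬ (bipartiteRelGraph r).Adj (.inr j) (.inr j') := by
  simp [bipartiteRelGraph]

lemma projectionGraph_adj {i i' : α} :
    (projectionGraph r).Adj i i' ↔ i ≠ i' ∧ ∃ j, r i j ∧ r i' j := by
  simp only [projectionGraph, fromRel_adj, and_comm (a := r i' _), or_self]

namespace projectionGraph

noncomputable def commonNeighbor (d : (projectionGraph r).Dart) : β :=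
  (projectionGraph_adj.mp d.adj).2.choose

lemma rel_fst_commonNeighbor (d : (projectionGraph r).Dart) : r d.fst (commonNeighbor d) :=
  (projectionGraph_adj.mp d.adj).2.choose_spec.1

lemma rel_snd_commonNeighbor (d : (projectionGraph r).Dart) : r d.snd (commonNeighbor d) :=
  (projectionGraph_adj.mp d.adj).2.choose_spec.2

noncomputable def liftWalk :
    ∀ {u v : α}, (projectionGraph r).Walk u v → (bipartiteRelGraph r).Walk (.inl u) (.inl v)
  | _, _, .nil => .nil
  | _, _, .cons h p =>
    .cons (bipartiteRelGraph_adj_inl_inr.mpr (rel_fst_commonNeighbor ⟨(_, _), h⟩))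
      (.cons (bipartiteRelGraph_adj_inr_inl.mpr (rel_snd_commonNeighbor ⟨(_, _), h⟩))
        (liftWalk p))

variable {u v : α}

@[simp] lemma length_liftWalk (p : (projectionGraph r).Walk u v) :
    (liftWalk p).length = 2 * p.length := by
  induction p with
  | nil => rfl
  | cons h p ih => simp only [liftWalk, Walk.length_cons, ih]; ring

@[simp] lemma inl_mem_support_liftWalk {p : (projectionGraph r).Walk u v} {a : α} :
    .inl a ∈ (liftWalk p).support ↔ a ∈ p.support := by
  induction p with
  | nil => simp [liftWalk]
  | cons h p ih => simp [liftWalk, ih]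

@[simp] lemma inr_mem_support_liftWalk {p : (projectionGraph r).Walk u v} {b : β} :
    .inr b ∈ (liftWalk p).support ↔ ∃ d ∈ p.darts, commonNeighbor d = b := by
  induction p with
  | nil => simp [liftWalk]
  | cons h p ih => simp [liftWalk, ih, eq_comm]

lemma mem_edges_liftWalk {p : (projectionGraph r).Walk u v} {d : (projectionGraph r).Dart}
    (hd : d ∈ p.darts) :
    s(.inl d.fst, .inr (commonNeighbor d)) ∈ (liftWalk p).edges ∧
      s(.inl d.snd, .inr (commonNeighbor d)) ∈ (liftWalk p).edges := by
  induction p with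
  | nil => simp at hd
  | cons h p ih =>
    simp only [Walk.darts_cons, List.mem_cons] at hd
    rcases hd with rfl | hd
    · simp [liftWalk, Sym2.eq_swap]
    · simp [liftWalk, ih hd]

lemma isPath_liftWalk {p : (projectionGraph r).Walk u v} (hp : p.IsPath)
    (hinj : (p.darts.map commonNeighbor).Nodup) : (liftWalk p).IsPath := by
  induction p with
  | nil => exact .nil
  | cons h p ih =>
    rw [Walk.cons_isPath_iff] at hp
    simp only [Walk.darts_cons, List.map_cons, List.nodup_cons] at hinj
    simp only [liftWalk, Walk.cons_isPath_iff, Walk.support_cons,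
      List.mem_cons, inl_mem_support_liftWalk, inr_mem_support_liftWalk]
    refine ⟨⟨ih hp.1 hinj.2, ?_⟩, ?_⟩
    · simpa using hinj.1
    · simpa using hp.2

lemma isCycle_liftWalk {c : (projectionGraph r).Walk u u} (hc : c.IsCycle)
    (hinj : (c.darts.map commonNeighbor).Nodup) : (liftWalk c).IsCycle := by
  cases c with
  | nil => exact absurd hc Walk.not_isCycle_nil
  | cons h p =>
    rw [Walk.cons_isCycle_iff] at hc
    simp only [Walk.darts_cons, List.map_cons, List.nodup_cons] at hinj
    have hp : (liftWalk p).IsPath := isPath_liftWalk hc.1 hinj.2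
    have hm : .inr (commonNeighbor ⟨(_, _), h⟩) ∉ (liftWalk p).support := by
      simpa using hinj.1
    simp only [liftWalk, Walk.cons_isCycle_iff, Walk.cons_isPath_iff,
      Walk.edges_cons, List.mem_cons, not_or]
    refine ⟨⟨hp, hm⟩, ?_, fun he => hm (Walk.snd_mem_support_of_mem_edges _ he)⟩
    simpa [Sym2.eq_swap] using h.ne

section Chordless

variable {c : (projectionGraph r).Walk u u}

lemma hasChord_of_rel_of_rel_of_rel (hc : c.IsCycle) (h4 : 4 ≤ c.length) {a b x : α} {j : β}
    (ha : a ∈ c.support) (hb : b ∈ c.support) (hx : x ∈ c.support)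
    (hab : a ≠ b) (hax : a ≠ x) (hbx : b ≠ x) (hja : r a j) (hjb : r b j) (hjx : r x j) :
    c.HasChord := by
  by_contra hch
  have hedge : ∀ {y z}, y ∈ c.support → z ∈ c.support → y ≠ z → r y j → r z j →
      s(y, z) ∈ c.edges := by
    intro y z hy hz hyz hry hrz
    by_contra he
    exact hch ⟨y, z, hy, hz, projectionGraph_adj.mpr ⟨hyz, j, hry, hrz⟩, he⟩
  have := hc.length_eq_three_of_triangle (hedge ha hb hab hja hjb) (hedge ha hx hax hja hjx)
    (hedge hb hx hbx hjb hjx) hbx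
  omega

lemma nodup_map_commonNeighbor_darts (hc : c.IsCycle) (h4 : 4 ≤ c.length)
    (hch : ¬ c.HasChord) : (c.darts.map commonNeighbor).Nodup := by
  have hedges : (c.darts.map Dart.edge).Nodup := hc.edges_nodup
  refine (hedges.of_map _).map_on fun d hd d' hd' hj => ?_
  by_contra hne
  have hedge : d.edge ≠ d'.edge := fun h => hne (List.inj_on_of_nodup_map hedges hd hd' h)
  have hfst := c.dart_fst_mem_support_of_mem_darts hd
  have hsnd := c.dart_snd_mem_support_of_mem_darts hd
  have no_third {x} (hx : x ∈ c.support) (hxf : x ≠ d.fst) (hxs : x ≠ d.snd)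
      (hxj : r x (commonNeighbor d)) : False :=
    hch (hasChord_of_rel_of_rel_of_rel hc h4 hfst hsnd hx d.adj.ne hxf.symm hxs.symm
      (rel_fst_commonNeighbor d) (rel_snd_commonNeighbor d) hxj)
  by_cases hf : d'.fst = d.fst ∨ d'.fst = d.snd
  · by_cases hs : d'.snd = d.fst ∨ d'.snd = d.snd
    · apply hedge
      have := d'.adj.ne
      rw [Dart.edge, Dart.edge, Sym2.mk_eq_mk_iff]
      grind
    · rw [not_or] at hs
      exact no_third (c.dart_snd_mem_support_of_mem_darts hd') hs.1 hs.2
        (hj ▸ rel_snd_commonNeighbor d')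
  · rw [not_or] at hf
    exact no_third (c.dart_fst_mem_support_of_mem_darts hd') hf.1 hf.2
      (hj ▸ rel_fst_commonNeighbor d')

lemma inl_inr_mem_edges_liftWalk (hc : c.IsCycle) (h4 : 4 ≤ c.length) (hch : ¬ c.HasChord)
    {a : α} {b : β} (ha : .inl a ∈ (liftWalk c).support) (hb : .inr b ∈ (liftWalk c).support)
    (hab : r a b) : s(.inl a, .inr b) ∈ (liftWalk c).edges := by
  rw [inl_mem_support_liftWalk] at ha
  obtain ⟨d, hd, rfl⟩ := inr_mem_support_liftWalk.mp hb
  by_cases hf : a = d.fst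
  · exact hf ▸ (mem_edges_liftWalk hd).1
  by_cases hs : a = d.snd
  · exact hs ▸ (mem_edges_liftWalk hd).2
  exact (hch (hasChord_of_rel_of_rel_of_rel hc h4 ha (c.dart_fst_mem_support_of_mem_darts hd)
    (c.dart_snd_mem_support_of_mem_darts hd) hf hs d.adj.ne hab (rel_fst_commonNeighbor d)
    (rel_snd_commonNeighbor d))).elim

end Chordless

end projectionGraph

theorem isChordalGraph_projectionGraph
    (h : ∀ (v : α ⊕ β) (w : (bipartiteRelGraph r).Walk v v),
      w.IsCycle → 8 ≤ w.length → w.HasChord) :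
    (projectionGraph r).IsChordalGraph := by
  intro u c hc h4
  by_contra hch
  obtain ⟨x, y, hx, hy, hxy, hne⟩ := h _ (projectionGraph.liftWalk c)
    (projectionGraph.isCycle_liftWalk hc (projectionGraph.nodup_map_commonNeighbor_darts hc h4 hch))
    (by rw [projectionGraph.length_liftWalk]; omega)
  rcases x with a | b <;> rcases y with a' | b'
  · simp at hxy
  · exact hne (projectionGraph.inl_inr_mem_edges_liftWalk hc h4 hch hx hy (by simpa using hxy))
  · rw [Sym2.eq_swap] at hne
    exact hne (projectionGraph.inl_inr_mem_edges_liftWalk hc h4 hch hy hx (by simpa using hxy))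
  · simp at hxy

end Projection

lemma Matrix.mul_transpose_apply_ne_zero_iff {ι κ R : Type*} [Fintype κ] [Semiring R]
    [PartialOrder R] [IsOrderedRing R] [NoZeroDivisors R] {M : Matrix ι κ R}
    (hM : ∀ i j, 0 ≤ M i j) (i i' : ι) :
    (M * Mᵀ) i i' ≠ 0 ↔ ∃ j, M i j ≠ 0 ∧ M i' j ≠ 0 := by
  simp only [Matrix.mul_apply, Matrix.transpose_apply, Ne,
    Finset.sum_eq_zero_iff_of_nonneg fun j _ => mul_nonneg (hM i j) (hM i' j)]
  simp

lemma primaryGraph_eq {m n : ℕ} (M : Matrix (Fin m) (Fin n) ℝ) :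
    primaryGraph M = bipartiteRelGraph fun i j => M i j ≠ 0 :=
  rfl

lemma sparsityGraph_mul_transpose {m n : ℕ} {M : Matrix (Fin m) (Fin n) ℝ}
    (hM : ∀ i j, 0 ≤ M i j) :
    sparsityGraph (M * Mᵀ) = projectionGraph fun i j => M i j ≠ 0 := by
  ext i i'
  rw [projectionGraph_adj, sparsityGraph, SimpleGraph.fromRel_adj,
    Matrix.mul_transpose_apply_ne_zero_iff hM, Matrix.mul_transpose_apply_ne_zero_iff hM]
  grind

/-- If every cycle of length at least 8 in the primary bipartite graph of a nonnegative matrix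
`M` has a chord, then `M * Mᵀ` has a chordal sparsity pattern. -/
theorem mul_transpose_chordal {m n : ℕ} (M : Matrix (Fin m) (Fin n) ℝ)
    (hM : ∀ i j, 0 ≤ M i j)
    (hchord : ∀ (v : Fin m ⊕ Fin n) (w : (primaryGraph M).Walk v v),
      w.IsCycle → 8 ≤ w.length → w.HasChord) :
    (sparsityGraph (M * Mᵀ)).IsChordalGraph := by
  rw [primaryGraph_eq] at hchord
  rw [sparsityGraph_mul_transpose hM]
  exact isChordalGraph_projectionGraph hchord
end

section
/- Let M be an m×n real matrix with nonnegative entries and let PG be its primary bipartite graph. If every cycle of length at least 8 in PG has a chord, then the matrix Mᵀ M has a chordal sparsity pattern. -/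
/-!
By nonnegativity there is no cancellation in `(Mᵀ * M) a b = ∑ i, M i a * M i b`, so two columns
are adjacent in the sparsity graph of `Mᵀ * M` exactly when some row is nonzero in both. Given a
chordless cycle `c₀ c₁ … c_{k-1}` with `k ≥ 4` in that graph, pick such a row `r_t` for each edge
`c_t c_{t+1}`. A column of the cycle other than `c_t, c_{t+1}` on which `r_t` is nonzero would
form a triangle with them, which a chordless cycle of length at least 4 cannot contain. Hence the
`r_t` are distinct and `c₀ r₀ c₁ r₁ … c_{k-1} r_{k-1}` is a chordless cycle of length `2k ≥ 8` in
the primary bipartite graph of `M`.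
-/

open Matrix

namespace SimpleGraph.Walk

variable {V : Type*} {G : SimpleGraph V} {u : V}

lemma IsCycle.not_toSubgraph_adj_snd_penultimate {p : G.Walk u u} (hp : p.IsCycle)
    (hlen : 4 ≤ p.length) : ¬ p.toSubgraph.Adj p.snd p.penultimate := by
  intro h
  have hmem : p.penultimate ∈ p.toSubgraph.neighborSet (p.getVert 1) := h
  rw [hp.neighborSet_toSubgraph_internal one_ne_zero (by omega)] at hmem
  rcases hmem with h0 | h2
  · have := (hp.getVert_endpoint_iff (i := p.length - 1) (by omega)).1 (by simpa using h0)
    omega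
  · have := hp.getVert_injOn (by simp only [Set.mem_ofPred_eq]; omega)
      (by simp only [Set.mem_ofPred_eq]; omega) h2
    omega

lemma IsCycle.length_eq_three_of_toSubgraph_adj {p : G.Walk u u} (hp : p.IsCycle) {a b c : V}
    (hab : p.toSubgraph.Adj a b) (hbc : p.toSubgraph.Adj b c) (hca : p.toSubgraph.Adj c a) :
    p.length = 3 := by
  classical
  by_contra hne
  have ha : a ∈ p.support := p.mem_verts_toSubgraph.1 hab.fst_mem
  have hlen : 4 ≤ (p.rotate a ha).length := by
    have := hp.three_le_length; rw [length_rotate]; omega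
  rw [← toSubgraph_rotate p ha] at hab hbc hca
  have hb : b ∈ (p.rotate a ha).toSubgraph.neighborSet a := hab
  have hc : c ∈ (p.rotate a ha).toSubgraph.neighborSet a := hca.symm
  rw [(hp.rotate ha).neighborSet_toSubgraph_endpoint] at hb hc
  have hsp := (hp.rotate ha).not_toSubgraph_adj_snd_penultimate hlen
  rcases hb with rfl | rfl <;> rcases hc with rfl | rfl
  · exact hbc.ne rfl
  · exact hsp hbc
  · exact hsp hbc.symm
  · exact hbc.ne rfl

lemma toSubgraph_adj_of_not_hasChord {x y : V} {p : G.Walk u u} (hp : ¬ p.HasChord)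
    (hx : x ∈ p.support) (hy : y ∈ p.support) (hxy : G.Adj x y) : p.toSubgraph.Adj x y :=
  adj_toSubgraph_iff_mem_edges.2 <| by_contra fun he => hp ⟨x, y, hx, hy, hxy, he⟩

lemma IsCycle.not_adj_of_not_hasChord {p : G.Walk u u} (hp : p.IsCycle) (hlen : 4 ≤ p.length)
    (hnc : ¬ p.HasChord) {a b c : V}
    (ha : a ∈ p.support) (hb : b ∈ p.support) (hc : c ∈ p.support)
    (hab : G.Adj a b) (hbc : G.Adj b c) : ¬ G.Adj c a := fun hca => by
  have := hp.length_eq_three_of_toSubgraph_adj (toSubgraph_adj_of_not_hasChord hnc ha hb hab)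
    (toSubgraph_adj_of_not_hasChord hnc hb hc hbc) (toSubgraph_adj_of_not_hasChord hnc hc ha hca)
  omega

end SimpleGraph.Walk

lemma List.nodup_flatMap_inl_inr {α β γ : Type*} {l : List α} {f : α → β} {g : α → γ}
    (hf : (l.map f).Nodup) (hg : (l.map g).Nodup) :
    (l.flatMap fun x => [Sum.inl (f x), Sum.inr (g x)]).Nodup := by
  induction l with
  | nil => simp
  | cons x l ih =>
    simp only [List.map_cons, List.nodup_cons, List.mem_map] at hf hg
    simp only [List.flatMap_cons, List.cons_append, List.nil_append, List.nodup_cons,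
      List.mem_cons, List.mem_flatMap, Sum.inl.injEq, Sum.inr.injEq,
      reduceCtorEq, false_or, or_false, List.not_mem_nil]
    exact ⟨fun ⟨y, hy, h⟩ => hf.1 ⟨y, hy, h.symm⟩, fun ⟨y, hy, h⟩ => hg.1 ⟨y, hy, h.symm⟩,
      ih hf.2 hg.2⟩

section TransposeMul

variable {ι κ R : Type*} [Fintype ι] [Semiring R]

lemma Matrix.exists_ne_zero_of_transpose_mul_apply_ne_zero {M : Matrix ι κ R} {a b : κ}
    (h : (Mᵀ * M) a b ≠ 0) : ∃ i, M i a ≠ 0 ∧ M i b ≠ 0 := by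
  obtain ⟨i, -, hi⟩ := Finset.exists_ne_zero_of_sum_ne_zero h
  exact ⟨i, fun h0 => hi (by simp [h0]), fun h0 => hi (by simp [h0])⟩

lemma Matrix.transpose_mul_apply_ne_zero [PartialOrder R] [IsStrictOrderedRing R]
    {M : Matrix ι κ R} (hM : ∀ i j, 0 ≤ M i j) {i : ι} {a b : κ} (ha : M i a ≠ 0)
    (hb : M i b ≠ 0) : (Mᵀ * M) a b ≠ 0 := by
  refine (Finset.sum_pos' (fun k _ => mul_nonneg (hM k a) (hM k b)) ⟨i, Finset.mem_univ i, ?_⟩).ne'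
  exact mul_pos ((hM i a).lt_of_ne ha.symm) ((hM i b).lt_of_ne hb.symm)

end TransposeMul

section PrimaryWalk

open SimpleGraph

variable {m n : ℕ} {M : Matrix (Fin m) (Fin n) ℝ}

lemma primaryGraph_adj_inl_inr {i : Fin m} {j : Fin n} :
    (primaryGraph M).Adj (Sum.inl i) (Sum.inr j) ↔ M i j ≠ 0 := by
  simp [primaryGraph]

lemma exists_ne_zero_of_sparsityGraph_adj {a b : Fin n} (h : (sparsityGraph (Mᵀ * M)).Adj a b) :
    ∃ i, M i a ≠ 0 ∧ M i b ≠ 0 := by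
  rcases h.2 with h | h
  · exact Matrix.exists_ne_zero_of_transpose_mul_apply_ne_zero h
  · exact (Matrix.exists_ne_zero_of_transpose_mul_apply_ne_zero h).imp fun _ => And.symm

lemma sparsityGraph_adj_of_ne_zero (hM : ∀ i j, 0 ≤ M i j) {i : Fin m} {a b : Fin n}
    (hab : a ≠ b) (ha : M i a ≠ 0) (hb : M i b ≠ 0) : (sparsityGraph (Mᵀ * M)).Adj a b :=
  ⟨hab, Or.inl (Matrix.transpose_mul_apply_ne_zero hM ha hb)⟩

noncomputable def commonRow {a b : Fin n} (h : (sparsityGraph (Mᵀ * M)).Adj a b) : Fin m :=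
  (exists_ne_zero_of_sparsityGraph_adj h).choose

lemma commonRow_spec {a b : Fin n} (h : (sparsityGraph (Mᵀ * M)).Adj a b) :
    M (commonRow h) a ≠ 0 ∧ M (commonRow h) b ≠ 0 :=
  (exists_ne_zero_of_sparsityGraph_adj h).choose_spec

noncomputable def primaryWalk : ∀ {u v : Fin n}, (sparsityGraph (Mᵀ * M)).Walk u v →
    (primaryGraph M).Walk (Sum.inr u) (Sum.inr v)
  | _, _, .nil => .nil
  | _, _, .cons h p =>
      .cons (primaryGraph_adj_inl_inr.2 (commonRow_spec h).1).symm
        (.cons (primaryGraph_adj_inl_inr.2 (commonRow_spec h).2) (primaryWalk p))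

variable {u v : Fin n}

lemma length_primaryWalk (p : (sparsityGraph (Mᵀ * M)).Walk u v) :
    (primaryWalk p).length = 2 * p.length := by
  induction p with
  | nil => rfl
  | cons h p ih => simp only [primaryWalk, Walk.length_cons, ih]; omega

lemma support_primaryWalk (p : (sparsityGraph (Mᵀ * M)).Walk u v) :
    (primaryWalk p).support =
      Sum.inr u :: p.darts.flatMap fun d => [Sum.inl (commonRow d.adj), Sum.inr d.snd] := by
  induction p with
  | nil => rfl
  | cons h p ih => simp [primaryWalk, ih]

lemma inl_mem_support_primaryWalk {p : (sparsityGraph (Mᵀ * M)).Walk u v} {i : Fin m} :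
    Sum.inl i ∈ (primaryWalk p).support ↔ ∃ d ∈ p.darts, commonRow d.adj = i := by
  simp [support_primaryWalk, eq_comm]

lemma inr_mem_support_primaryWalk {p : (sparsityGraph (Mᵀ * M)).Walk u v} {c : Fin n} :
    Sum.inr c ∈ (primaryWalk p).support ↔ c ∈ p.support := by
  induction p with
  | nil => simp [primaryWalk]
  | cons h p ih => simp [primaryWalk, ih]

lemma mem_edges_primaryWalk {p : (sparsityGraph (Mᵀ * M)).Walk u v} {d} (hd : d ∈ p.darts) :
    s(Sum.inr d.fst, Sum.inl (commonRow d.adj)) ∈ (primaryWalk p).edges ∧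
      s(Sum.inl (commonRow d.adj), Sum.inr d.snd) ∈ (primaryWalk p).edges := by
  induction p with
  | nil => simp at hd
  | cons h p ih =>
    rw [Walk.darts_cons, List.mem_cons] at hd
    rcases hd with rfl | hd
    · simp [primaryWalk]
    · simp [primaryWalk, ih hd]

lemma isCycle_primaryWalk {w : (sparsityGraph (Mᵀ * M)).Walk v v} (hw : w.IsCycle)
    (hrows : (w.darts.map fun d => commonRow d.adj).Nodup) :
    (primaryWalk w).IsCycle := by
  have hlen := hw.three_le_length
  have hne : ¬ (primaryWalk w).Nil := by rw [← Walk.length_eq_zero_iff, length_primaryWalk]; omega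
  rw [Walk.isCycle_iff_isPath_tail_and_le_length, Walk.isPath_def,
    Walk.support_tail_of_not_nil _ hne, support_primaryWalk, List.tail_cons, length_primaryWalk]
  refine ⟨List.nodup_flatMap_inl_inr hrows ?_, by omega⟩
  rw [Walk.map_snd_darts]
  exact hw.support_nodup

lemma not_hasChord_of_forall_mem_edges {x : Fin m ⊕ Fin n} {q : (primaryGraph M).Walk x x}
    (h : ∀ i c, Sum.inl i ∈ q.support → Sum.inr c ∈ q.support → M i c ≠ 0 →
      s(Sum.inl i, Sum.inr c) ∈ q.edges) : ¬ q.HasChord := by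
  rintro ⟨x, y, hx, hy, hxy, he⟩
  rcases hxy.2 with ⟨i, c, rfl, rfl, hic⟩ | ⟨i, c, rfl, rfl, hic⟩
  · exact he (h i c hx hy hic)
  · exact he (Sym2.eq_swap ▸ h i c hy hx hic)

section Chordless

variable (hM : ∀ i j, 0 ≤ M i j) {w : (sparsityGraph (Mᵀ * M)).Walk v v} (hw : w.IsCycle)
  (hlen : 4 ≤ w.length) (hnc : ¬ w.HasChord)
include hM hw hlen hnc

lemma eq_fst_or_eq_snd_of_commonRow_ne_zero {d} (hd : d ∈ w.darts) {c : Fin n}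
    (hc : c ∈ w.support) (hMc : M (commonRow d.adj) c ≠ 0) : c = d.fst ∨ c = d.snd := by
  by_contra! h
  obtain ⟨ha, hb⟩ := commonRow_spec d.adj
  exact hw.not_adj_of_not_hasChord hlen hnc (w.dart_fst_mem_support_of_mem_darts hd)
    (w.dart_snd_mem_support_of_mem_darts hd) hc d.adj
    (sparsityGraph_adj_of_ne_zero hM h.2.symm hb hMc) (sparsityGraph_adj_of_ne_zero hM h.1 hMc ha)

lemma nodup_map_commonRow : (w.darts.map fun d => commonRow d.adj).Nodup := by
  refine (hw.edges_nodup.of_map _).map_on fun d hd d' hd' h => ?_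
  have hrow := commonRow_spec d'.adj
  rw [← h] at hrow
  have hfst := eq_fst_or_eq_snd_of_commonRow_ne_zero hM hw hlen hnc hd
    (w.dart_fst_mem_support_of_mem_darts hd') hrow.1
  rcases eq_fst_or_eq_snd_of_commonRow_ne_zero hM hw hlen hnc hd
    (w.dart_snd_mem_support_of_mem_darts hd') hrow.2 with hsnd | hsnd
  · have hfst' : d'.fst = d.snd := hfst.resolve_left fun h' => d'.adj.ne (h'.trans hsnd.symm)
    refine List.inj_on_of_nodup_map hw.edges_nodup hd hd' ?_
    simp [Dart.edge, hfst', hsnd, Sym2.eq_swap]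
  · refine List.inj_on_of_nodup_map (f := (·.snd)) ?_ hd hd' hsnd.symm
    rw [Walk.map_snd_darts]
    exact hw.support_nodup

lemma not_hasChord_primaryWalk : ¬ (primaryWalk w).HasChord := by
  refine not_hasChord_of_forall_mem_edges fun i c hi hc hic => ?_
  obtain ⟨d, hd, rfl⟩ := inl_mem_support_primaryWalk.1 hi
  rcases eq_fst_or_eq_snd_of_commonRow_ne_zero hM hw hlen hnc hd
    (inr_mem_support_primaryWalk.1 hc) hic with rfl | rfl
  · exact Sym2.eq_swap ▸ (mem_edges_primaryWalk hd).1
  · exact (mem_edges_primaryWalk hd).2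

end Chordless

end PrimaryWalk

/-- If every cycle of length at least 8 in the primary bipartite graph of a nonnegative matrix
`M` has a chord, then `Mᵀ * M` has a chordal sparsity pattern. -/
theorem transpose_mul_chordal {m n : ℕ} (M : Matrix (Fin m) (Fin n) ℝ)
    (hM : ∀ i j, 0 ≤ M i j)
    (hchord : ∀ (v : Fin m ⊕ Fin n) (w : (primaryGraph M).Walk v v),
      w.IsCycle → 8 ≤ w.length → w.HasChord) :
    (sparsityGraph (Mᵀ * M)).IsChordalGraph := by
  intro v w hw hlen
  by_contra hnc
  have hcyc := isCycle_primaryWalk hw (nodup_map_commonRow hM hw hlen hnc)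
  exact not_hasChord_primaryWalk hM hw hlen hnc
    (hchord _ _ hcyc (by rw [length_primaryWalk]; omega))
end

section
/- Let V be an m×n real matrix with nonnegative entries such that every row sum of V is positive, let M be the diagonal matrix of row sums of V, N the diagonal matrix of column sums of V, and S_M = N − Vᵀ M⁻¹ V. Then S_M is weakly diagonally dominant with zero excess: for every k ∈ {1,…,n}, |(S_M)_{kk}| − Σ_{i≠k} |(S_M)_{ki}| = 0. -/
open Matrix

/-- For a nonnegative matrix `V` with positive row sums, the Schur complement
`S_M = N − Vᵀ M⁻¹ V` (where `M`, `N` are the diagonal matrices of row and column sums of `V`)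
is weakly diagonally dominant with zero excess:
`|(S_M)_{kk}| − ∑_{i ≠ k} |(S_M)_{ki}| = 0` for every `k`. -/
theorem schur_complement_SM_diag_dominant {m n : ℕ} (V : Matrix (Fin m) (Fin n) ℝ)
    (hV : ∀ i j, 0 ≤ V i j) (hrow : ∀ i, 0 < ∑ j, V i j)
    (S : Matrix (Fin n) (Fin n) ℝ)
    (hS : S = Matrix.diagonal (fun j => ∑ i, V i j) -
      Vᵀ * (Matrix.diagonal fun i => ∑ j, V i j)⁻¹ * V)
    (k : Fin n) :
    |S k k| - ∑ i ∈ Finset.univ.erase k, |S k i| = 0 := by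
  set r : Fin m → ℝ := fun i => ∑ j, V i j with hr
  have hinv : (Matrix.diagonal r)⁻¹ = Matrix.diagonal (fun i => (r i)⁻¹) := by
    refine Matrix.inv_eq_right_inv ?_
    rw [Matrix.diagonal_mul_diagonal, ← Matrix.diagonal_one]
    have h1 : (fun i => r i * (r i)⁻¹) = fun _ => (1 : ℝ) :=
      funext fun i => mul_inv_cancel₀ (hrow i).ne'
    rw [h1]
  set c : Fin n → ℝ := fun i => ∑ t, V t k * (r t)⁻¹ * V t i with hc
  have hentry : ∀ i, S k i = (if i = k then ∑ t, V t k else 0) - c i := by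
    intro i
    subst hS
    rw [hinv]
    simp [Matrix.mul_apply, Matrix.diagonal_apply, Matrix.sub_apply, eq_comm,
      Finset.sum_mul, mul_assoc]
    simp [hc, mul_assoc]
  have hcnn : ∀ i, 0 ≤ c i := fun i =>
    Finset.sum_nonneg fun t _ =>
      mul_nonneg (mul_nonneg (hV t k) (inv_nonneg.2 (hrow t).le)) (hV t i)
  have hsumc : ∑ i, c i = ∑ t, V t k := by
    rw [Finset.sum_comm]
    refine Finset.sum_congr rfl fun t _ => ?_
    rw [← Finset.mul_sum]
    show V t k * (∑ j, V t j)⁻¹ * ∑ j, V t j = V t k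
    rw [mul_assoc, inv_mul_cancel₀ (hrow t).ne', mul_one]
  have hdiag : 0 ≤ S k k := by
    rw [hentry k, if_pos rfl, sub_nonneg, ← hsumc]
    exact Finset.sum_le_sum_of_subset_of_nonneg (Finset.subset_univ {k})
      (fun i _ _ => hcnn i) |>.trans_eq' (by simp)
  have hoff : ∀ i, i ≠ k → S k i = -c i := by
    intro i hi
    rw [hentry i, if_neg hi, zero_sub]
  rw [abs_of_nonneg hdiag, hentry k, if_pos rfl]
  have : ∑ i ∈ Finset.univ.erase k, |S k i| = (∑ i, c i) - c k := by
    rw [← Finset.sum_erase_add _ _ (Finset.mem_univ k), add_sub_cancel_right]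
    exact Finset.sum_congr rfl fun i hi => by
      rw [hoff i (Finset.ne_of_mem_erase hi), abs_neg, abs_of_nonneg (hcnn i)]
  rw [this, hsumc]
  ring
end

section
/- Let V be an m×n real matrix with nonnegative entries such that every column sum of V is positive, let M be the diagonal matrix of row sums of V, N the diagonal matrix of column sums of V, and S_N = M − V N⁻¹ Vᵀ. Then S_N is weakly diagonally dominant with zero excess: for every k ∈ {1,…,m}, |(S_N)_{kk}| − Σ_{i≠k} |(S_N)_{ki}| = 0. -/
open Matrix

/-- For a nonnegative matrix `V` with positive column sums, the Schur complement
`S_N = M − V N⁻¹ Vᵀ` (where `M`, `N` are the diagonal matrices of row and column sums of `V`)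
is weakly diagonally dominant with zero excess:
`|(S_N)_{kk}| − ∑_{i ≠ k} |(S_N)_{ki}| = 0` for every `k`. -/
theorem schur_complement_SN_diag_dominant {m n : ℕ} (V : Matrix (Fin m) (Fin n) ℝ)
    (hV : ∀ i j, 0 ≤ V i j) (hcol : ∀ j, 0 < ∑ i, V i j)
    (S : Matrix (Fin m) (Fin m) ℝ)
    (hS : S = Matrix.diagonal (fun i => ∑ j, V i j) -
      V * (Matrix.diagonal fun j => ∑ i, V i j)⁻¹ * Vᵀ)
    (k : Fin m) :
    |S k k| - ∑ i ∈ Finset.univ.erase k, |S k i| = 0 := by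
  have hent : ∀ i, S k i =
      (if k = i then ∑ j, V k j else 0) - ∑ j, V k j * (∑ i', V i' j)⁻¹ * V i j := by
    intro i
    have hdinv : (Matrix.diagonal fun j => ∑ i', V i' j)⁻¹ =
        Matrix.diagonal (fun j => (∑ i', V i' j)⁻¹) := by
      apply Matrix.inv_eq_right_inv
      rw [Matrix.diagonal_mul_diagonal]
      simp only [fun j => mul_inv_cancel₀ (hcol j).ne']
      rfl
    simp [hS, Matrix.sub_apply, Matrix.mul_apply, hdinv,
      Matrix.diagonal_apply, Matrix.transpose_apply,
      Finset.sum_ite_eq, mul_comm, mul_assoc, mul_left_comm]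
  have hinv : ∀ j, 0 ≤ (∑ i', V i' j)⁻¹ := fun j => (inv_pos.mpr (hcol j)).le
  -- off-diagonal entries nonpositive
  have hoff : ∀ i, i ≠ k → S k i ≤ 0 := by
    intro i hi
    rw [hent i, if_neg (fun h => hi h.symm)]
    simp only [zero_sub, neg_nonpos]
    exact Finset.sum_nonneg fun j _ =>
      mul_nonneg (mul_nonneg (hV k j) (hinv j)) (hV i j)
  -- diagonal entry nonneg
  have hdiag : 0 ≤ S k k := by
    rw [hent k, if_pos rfl, sub_nonneg]
    apply Finset.sum_le_sum
    intro j _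
    have hle : V k j ≤ ∑ i', V i' j :=
      Finset.single_le_sum (fun i _ => hV i j) (Finset.mem_univ k)
    calc V k j * (∑ i', V i' j)⁻¹ * V k j
        ≤ 1 * V k j := by
          apply mul_le_mul_of_nonneg_right _ (hV k j)
          rw [← div_eq_mul_inv]
          exact (div_le_one (hcol j)).mpr hle
      _ = V k j := one_mul _
  -- row sum is zero
  have hrow : ∑ i, S k i = 0 := by
    have : ∑ i, S k i = (∑ j, V k j) - ∑ i, ∑ j, V k j * (∑ i', V i' j)⁻¹ * V i j := by
      simp only [hent]
      rw [Finset.sum_sub_distrib, Finset.sum_ite_eq Finset.univ k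
        (fun _ => ∑ j, V k j)]
      simp
    rw [this, sub_eq_zero, Finset.sum_comm]
    apply Finset.sum_congr rfl
    intro j _
    rw [← Finset.mul_sum, mul_assoc, inv_mul_cancel₀ (hcol j).ne', mul_one]
  have : |S k k| - ∑ i ∈ Finset.univ.erase k, |S k i| =
      S k k + ∑ i ∈ Finset.univ.erase k, S k i := by
    rw [abs_of_nonneg hdiag, sub_eq_add_neg, ← Finset.sum_neg_distrib]
    congr 1
    apply Finset.sum_congr rfl
    intro i hi
    rw [abs_of_nonpos (hoff i (Finset.ne_of_mem_erase hi)), neg_neg]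
  rw [this, ← Finset.add_sum_erase _ _ (Finset.mem_univ k)] at *
  linarith [hrow]
end

section
/- Let V be an m×n real matrix with nonnegative entries such that every row sum of V is positive, and let S_M = N − Vᵀ M⁻¹ V. Then every off-diagonal entry of S_M is nonpositive and every diagonal entry of S_M is nonnegative. -/
open Matrix

/-- For a nonnegative matrix `V` with positive row sums, the Schur complement
`S_M = N − Vᵀ M⁻¹ V` (where `M`, `N` are the diagonal matrices of row and column sums of `V`)
has nonpositive off-diagonal entries and nonnegative diagonal entries. -/
theorem schur_complement_SM_sign_pattern {m n : ℕ} (V : Matrix (Fin m) (Fin n) ℝ)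
    (hV : ∀ i j, 0 ≤ V i j) (hrow : ∀ i, 0 < ∑ j, V i j)
    (S : Matrix (Fin n) (Fin n) ℝ)
    (hS : S = Matrix.diagonal (fun j => ∑ i, V i j) -
      Vᵀ * (Matrix.diagonal fun i => ∑ j, V i j)⁻¹ * V) :
    (∀ k i : Fin n, k ≠ i → S k i ≤ 0) ∧ (∀ k : Fin n, 0 ≤ S k k) := by
  have hinv : (Matrix.diagonal fun i => ∑ j, V i j)⁻¹ =
      Matrix.diagonal (fun i => (∑ j, V i j)⁻¹) := by
    apply Matrix.inv_eq_right_inv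
    rw [Matrix.diagonal_mul_diagonal]
    convert Matrix.diagonal_one with i
    exact mul_inv_cancel₀ (hrow i).ne'
  have hentry : ∀ k i, (Vᵀ * (Matrix.diagonal fun i => ∑ j, V i j)⁻¹ * V) k i =
      ∑ l, V l k * (∑ j, V l j)⁻¹ * V l i := by
    intro k i
    rw [hinv, Matrix.mul_assoc, Matrix.mul_apply]
    congr 1
    funext l
    rw [Matrix.diagonal_mul, Matrix.transpose_apply]
    ring
  constructor
  · intro k i hki
    rw [hS]
    simp only [Matrix.sub_apply, Matrix.diagonal_apply_ne _ hki, hentry, zero_sub,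
      neg_nonpos]
    exact Finset.sum_nonneg fun l _ => mul_nonneg (mul_nonneg (hV l k)
      (inv_nonneg.mpr (hrow l).le)) (hV l i)
  · intro k
    rw [hS]
    simp only [Matrix.sub_apply, Matrix.diagonal_apply_eq, hentry, sub_nonneg]
    have hcol : (∑ i, V i k) = ∑ l, V l k := rfl
    rw [hcol]
    apply Finset.sum_le_sum
    intro l _
    have h1 : V l k * (∑ j, V l j)⁻¹ ≤ 1 := by
      rw [← div_eq_mul_inv, div_le_one (hrow l)]
      exact Finset.single_le_sum (fun j _ => hV l j) (Finset.mem_univ k)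
    calc V l k * (∑ j, V l j)⁻¹ * V l k ≤ 1 * V l k :=
          mul_le_mul_of_nonneg_right h1 (hV l k)
      _ = V l k := one_mul _
end
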